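/- For τ in the upper half-plane and z ∈ ℂ, ϑ₁₁(2τ, z + τ/2) · ϑ₁₁(2τ, z − τ/2) = q^{−1/8} (η(2τ)²/η(τ)) · ϑ₀₁(τ, z), where q = e^{2πiτ}. -/

import Mathlib

open Real Complex Filter Topology

noncomputable section

noncomputable def theta00 (τ z : ℂ) : ℂ :=
  ∑' n : ℤ, Complex.exp (2*(π:ℂ)*Complex.I*(n:ℂ)*z) *
    Complex.exp (2*(π:ℂ)*Complex.I*τ*((n:ℂ)^2/2))

noncomputable def theta01 (τ z : ℂ) : ℂ :=
  ∑' n : ℤ, (-1:ℂ)^n * Complex.exp (2*(π:ℂ)*Complex.I*(n:ℂ)*z) *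
    Complex.exp (2*(π:ℂ)*Complex.I*τ*((n:ℂ)^2/2))

noncomputable def theta10 (τ z : ℂ) : ℂ :=
  ∑' n : ℤ, Complex.exp (2*(π:ℂ)*Complex.I*((n:ℂ)+1/2)*z) *
    Complex.exp (2*(π:ℂ)*Complex.I*τ*((1/2)*((n:ℂ)+1/2)^2))

noncomputable def theta11 (τ z : ℂ) : ℂ :=
  Complex.I * ∑' n : ℤ, (-1:ℂ)^n * Complex.exp (2*(π:ℂ)*Complex.I*((n:ℂ)+1/2)*z) *
    Complex.exp (2*(π:ℂ)*Complex.I*τ*((1/2)*((n:ℂ)+1/2)^2))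

noncomputable def dedekindEta (τ : ℂ) : ℂ :=
  Complex.exp ((π:ℂ)*Complex.I*τ/12) *
    ∏' n : ℕ, (1 - Complex.exp (2*(π:ℂ)*Complex.I*τ*((n:ℂ)+1)))

/-!
Write `q = e^{2πiτ}` and expand both theta functions through Mathlib's `jacobiTheta₂`. In the
double series for `ϑ₁₁(2τ, z + τ/2) ϑ₁₁(2τ, z - τ/2)` the substitution `s = m + n`, `d = m - n`
splits off `ϑ₀₁(τ, z)`, leaving the inner sum `∑ q^{d(d+1)/2}` over `d ≡ s (mod 2)`; since
`d ↦ -1 - d` swaps the two parity classes, it is the same for every `s`, namely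
`ψ(q) = ∑_{j ∈ ℤ} q^{j(2j+1)}`. Gauss's identity `ψ(q) = (q²; q²)²_∞ / (q; q)_∞` then yields the eta
quotient. Gauss's identity is the limit `m → ∞` of the finite identity
`∏_{i<m} (1 + q^{4i+1})(1 + q^{4i+3}) = ∑_k [2m, k]_{q⁴} q^{(k-m)(2(k-m)+1)}`, an instance of
Rothe's `q`-binomial theorem; the right side passes to the limit termwise (Tannery's theorem)
because the Gaussian binomials `[n, k]_{q⁴}` are uniformly bounded.
-/

open Finset

-- As `j` runs over `ℤ`, `j (2j + 1)` runs once over the triangular numbers.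
def hexagonal (j : ℤ) : ℕ := (j * (2 * j + 1)).toNat

lemma natCast_hexagonal {R : Type*} [CommRing R] (j : ℤ) :
    (hexagonal j : R) = j * (2 * j + 1) := by
  rw [← Int.cast_natCast, hexagonal,
    Int.toNat_of_nonneg (by rcases le_or_gt 0 j with h | h <;> nlinarith)]
  push_cast
  ring

lemma hexagonal_injective : Function.Injective hexagonal := by
  intro a b h
  have hab : (a - b) * (2 * (a + b) + 1) = 0 := by
    have := congrArg (fun n : ℕ => (n : ℤ)) h
    simp only [natCast_hexagonal (R := ℤ)] at this
    linear_combination this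
  rcases mul_eq_zero.1 hab with h | h <;> omega

section QPochhammer

variable {R : Type*} [CommRing R]

def qPochhammer (x : R) (n : ℕ) : R := ∏ i ∈ range n, (1 - x ^ (i + 1))

lemma qPochhammer_zero (x : R) : qPochhammer x 0 = 1 := prod_range_zero _

lemma qPochhammer_succ (x : R) (n : ℕ) :
    qPochhammer x (n + 1) = qPochhammer x n * (1 - x ^ (n + 1)) :=
  prod_range_succ _ _

end QPochhammer

section GaussianBinomial

variable {K : Type*} [Field K] {x : K}

lemma qPochhammer_ne_zero (hx : ∀ n, x ^ (n + 1) ≠ 1) (n : ℕ) : qPochhammer x n ≠ 0 :=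
  prod_ne_zero_iff.2 fun i _ => sub_ne_zero.2 (hx i).symm

def gaussBinom (x : K) (m k : ℕ) : K :=
  if k ≤ m then qPochhammer x m / (qPochhammer x k * qPochhammer x (m - k)) else 0

lemma gaussBinom_zero_right (hx : ∀ n, x ^ (n + 1) ≠ 1) (m : ℕ) : gaussBinom x m 0 = 1 := by
  simp [gaussBinom, qPochhammer_zero, qPochhammer_ne_zero hx]

lemma gaussBinom_self (hx : ∀ n, x ^ (n + 1) ≠ 1) (m : ℕ) : gaussBinom x m m = 1 := by
  simp [gaussBinom, qPochhammer_zero, qPochhammer_ne_zero hx]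

lemma gaussBinom_of_lt {m k : ℕ} (h : m < k) : gaussBinom x m k = 0 := if_neg (by omega)

lemma gaussBinom_succ_succ (hx : ∀ n, x ^ (n + 1) ≠ 1) (m k : ℕ) :
    gaussBinom x (m + 1) (k + 1) = gaussBinom x m (k + 1) + x ^ (m - k) * gaussBinom x m k := by
  rcases lt_trichotomy k m with hk | rfl | hk
  · obtain ⟨d, rfl⟩ : ∃ d, m = k + 1 + d := ⟨m - k - 1, by omega⟩
    have hP := qPochhammer_ne_zero hx
    have h1 := sub_ne_zero.2 (hx k).symm
    have h2 := sub_ne_zero.2 (hx d).symm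
    simp only [gaussBinom, if_pos (by omega : k + 1 ≤ k + 1 + d + 1),
      if_pos (by omega : k + 1 ≤ k + 1 + d), if_pos (by omega : k ≤ k + 1 + d),
      show k + 1 + d + 1 - (k + 1) = d + 1 by omega, show k + 1 + d - (k + 1) = d by omega,
      show k + 1 + d - k = d + 1 by omega, qPochhammer_succ x (k + 1 + d),
      qPochhammer_succ x k, qPochhammer_succ x d]
    field_simp
    ring
  · simp [gaussBinom_self hx, gaussBinom_of_lt]
  · rw [gaussBinom_of_lt (by omega : m + 1 < k + 1), gaussBinom_of_lt (by omega : m < k + 1),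
      gaussBinom_of_lt hk, mul_zero, add_zero]

theorem prod_one_add_mul_pow_eq_sum_gaussBinom (hx : ∀ n, x ^ (n + 1) ≠ 1) (z : K) (m : ℕ) :
    ∏ j ∈ range m, (1 + z * x ^ j) =
      ∑ k ∈ range (m + 1), gaussBinom x m k * x ^ k.choose 2 * z ^ k := by
  induction m with
  | zero => simp [gaussBinom_zero_right hx]
  | succ m ih =>
    have hlow : ∑ k ∈ range (m + 1), gaussBinom x m (k + 1) * x ^ (k + 1).choose 2 * z ^ (k + 1)
        + gaussBinom x (m + 1) 0 * x ^ (0).choose 2 * z ^ 0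
        = ∑ k ∈ range (m + 1), gaussBinom x m k * x ^ k.choose 2 * z ^ k := by
      rw [gaussBinom_zero_right hx, ← gaussBinom_zero_right hx m,
        ← sum_range_succ' (fun k => gaussBinom x m k * x ^ k.choose 2 * z ^ k), sum_range_succ,
        gaussBinom_of_lt (Nat.lt_succ_self m), zero_mul, zero_mul, add_zero]
    have hhigh : ∀ k ∈ range (m + 1), x ^ (m - k) * gaussBinom x m k * x ^ (k + 1).choose 2 *
        z ^ (k + 1) = gaussBinom x m k * x ^ k.choose 2 * z ^ k * (z * x ^ m) := by
      intro k hk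
      have hexp : x ^ (m - k) * x ^ (k + 1).choose 2 = x ^ k.choose 2 * x ^ m := by
        have hc : (k + 1).choose 2 = k + k.choose 2 := by
          simpa using Nat.choose_succ_succ' k 1
        rw [← pow_add, ← pow_add, hc]
        congr 1
        have := mem_range.1 hk
        omega
      linear_combination (gaussBinom x m k * z ^ (k + 1)) * hexp
    rw [prod_range_succ, ih, sum_range_succ' _ (m + 1)]
    simp only [gaussBinom_succ_succ hx, add_mul, sum_add_distrib]
    rw [add_right_comm, hlow, sum_congr rfl hhigh, mul_add, mul_one, sum_mul]

lemma prod_pow_add_pow_eq_pow_mul_prod {R : Type*} [CommSemiring R] (x : R) (m : ℕ) :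
    ∏ j ∈ range (2 * m), (x ^ (4 * m) + x ^ (4 * j + 3)) =
      x ^ (6 * m ^ 2 + m) * ∏ i ∈ range m, ((1 + x ^ (4 * i + 1)) * (1 + x ^ (4 * i + 3))) := by
  induction m with
  | zero => simp
  | succ m ih =>
    rw [show 2 * (m + 1) = 2 * m + 1 + 1 by ring, prod_range_succ', prod_range_succ,
      prod_range_succ]
    have hstep : ∀ j ∈ range (2 * m), x ^ (4 * (m + 1)) + x ^ (4 * (j + 1) + 3) =
        x ^ 4 * (x ^ (4 * m) + x ^ (4 * j + 3)) := fun j _ => by ring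
    rw [prod_congr rfl hstep, prod_mul_distrib, prod_const, card_range, ih]
    ring

-- Rothe's identity at `z = x³ / x^{4m}`, cleared of denominators by `x^{8m²}`.
theorem prod_odd_pow_eq_sum_gaussBinom_hexagonal (hx : ∀ n, (x ^ 4) ^ (n + 1) ≠ 1) (hx0 : x ≠ 0)
    (m : ℕ) :
    ∏ i ∈ range m, ((1 + x ^ (4 * i + 1)) * (1 + x ^ (4 * i + 3))) =
      ∑ k ∈ range (2 * m + 1), gaussBinom (x ^ 4) (2 * m) k * x ^ hexagonal (k - m) := by
  have hrothe := prod_one_add_mul_pow_eq_sum_gaussBinom hx (x ^ 3 / x ^ (4 * m)) (2 * m)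
  have hprod : x ^ (8 * m ^ 2) * ∏ j ∈ range (2 * m), (1 + x ^ 3 / x ^ (4 * m) * (x ^ 4) ^ j) =
      ∏ j ∈ range (2 * m), (x ^ (4 * m) + x ^ (4 * j + 3)) := by
    have hcard : x ^ (8 * m ^ 2) = (x ^ (4 * m)) ^ #(range (2 * m)) := by
      rw [card_range, ← pow_mul]
      ring_nf
    rw [mul_comm, hcard, prod_mul_pow_card]
    refine prod_congr rfl fun j _ => ?_
    field_simp
    ring
  have hterm : ∀ k ∈ range (2 * m + 1), x ^ (8 * m ^ 2) *
      (gaussBinom (x ^ 4) (2 * m) k * (x ^ 4) ^ k.choose 2 * (x ^ 3 / x ^ (4 * m)) ^ k) =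
      x ^ (6 * m ^ 2 + m) * (gaussBinom (x ^ 4) (2 * m) k * x ^ hexagonal (k - m)) := by
    intro k _
    have hexp :
        8 * m ^ 2 + 4 * k.choose 2 + 3 * k = 6 * m ^ 2 + m + hexagonal (k - m) + 4 * m * k := by
      qify
      rw [Nat.cast_choose_two, natCast_hexagonal]
      push_cast
      ring
    have hpow : x ^ (8 * m ^ 2) * x ^ (4 * k.choose 2) * x ^ (3 * k) =
        x ^ (6 * m ^ 2 + m) * x ^ hexagonal (k - m) * x ^ (4 * m * k) := by
      simp only [← pow_add, hexp]
    rw [div_pow, ← pow_mul, ← pow_mul, ← pow_mul]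
    field_simp
    linear_combination gaussBinom (x ^ 4) (2 * m) k * hpow
  apply mul_left_cancel₀ (pow_ne_zero (6 * m ^ 2 + m) hx0)
  rw [← prod_pow_add_pow_eq_pow_mul_prod, ← hprod, hrothe, mul_sum, mul_sum,
    sum_congr rfl hterm]

end GaussianBinomial

section EulerFunction

variable {x : ℂ}

def eulerFun (x : ℂ) : ℂ := ∏' n : ℕ, (1 - x ^ (n + 1))

lemma pow_succ_ne_one_of_norm_lt_one (hx : ‖x‖ < 1) (n : ℕ) : x ^ (n + 1) ≠ 1 := fun h =>
  (pow_lt_one₀ (norm_nonneg x) hx n.succ_ne_zero).ne (by rw [← norm_pow, h, norm_one])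

lemma norm_pow_lt_one (hx : ‖x‖ < 1) {n : ℕ} (hn : n ≠ 0) : ‖x ^ n‖ < 1 := by
  rw [norm_pow]
  exact pow_lt_one₀ (norm_nonneg x) hx hn

lemma summable_norm_pow_comp (hx : ‖x‖ < 1) {e : ℕ → ℕ} (he : Function.Injective e) :
    Summable fun n => ‖x ^ e n‖ := by
  simp only [norm_pow]
  exact (summable_geometric_of_lt_one (norm_nonneg x) hx).comp_injective he

lemma multipliable_one_add_pow_comp (hx : ‖x‖ < 1) {e : ℕ → ℕ} (he : Function.Injective e) :
    Multipliable fun n => 1 + x ^ e n :=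
  multipliable_one_add_of_summable (summable_norm_pow_comp hx he)

lemma multipliable_one_sub_pow_comp (hx : ‖x‖ < 1) {e : ℕ → ℕ} (he : Function.Injective e) :
    Multipliable fun n => 1 - x ^ e n := by
  simpa only [sub_eq_add_neg] using
    multipliable_one_add_of_summable (f := fun n => -x ^ e n)
      (by simpa using summable_norm_pow_comp hx he)

lemma eulerFun_ne_zero (hx : ‖x‖ < 1) : eulerFun x ≠ 0 := by
  simpa only [eulerFun, sub_eq_add_neg] using
    tprod_one_add_ne_zero_of_summable (f := fun n => -x ^ (n + 1))
      (fun n => by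
        simpa [← sub_eq_add_neg, sub_eq_zero] using (pow_succ_ne_one_of_norm_lt_one hx n).symm)
      (by simpa using summable_norm_pow_comp hx (add_left_injective 1))

lemma tendsto_qPochhammer (hx : ‖x‖ < 1) :
    Tendsto (qPochhammer x) atTop (𝓝 (eulerFun x)) :=
  (multipliable_one_sub_pow_comp hx (add_left_injective 1)).hasProd.tendsto_prod_nat

lemma tprod_one_sub_pow_odd (hx : ‖x‖ < 1) :
    ∏' k : ℕ, (1 - x ^ (2 * k + 1)) = eulerFun x / eulerFun (x ^ 2) := by
  rw [eq_div_iff (eulerFun_ne_zero (norm_pow_lt_one hx two_ne_zero)),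
    eulerFun, eulerFun, ← tprod_even_mul_odd (f := fun n => 1 - x ^ (n + 1))]
  · congr 1
    exact tprod_congr fun k => by ring
  · exact multipliable_one_sub_pow_comp hx (e := fun k => 2 * k + 1) fun a b h => by
      simp only at h; omega
  · exact multipliable_one_sub_pow_comp hx (e := fun k => 2 * k + 1 + 1) fun a b h => by
      simp only at h; omega

lemma tprod_one_add_pow_odd (hx : ‖x‖ < 1) :
    ∏' k : ℕ, (1 + x ^ (2 * k + 1)) = eulerFun (x ^ 2) ^ 2 / (eulerFun x * eulerFun (x ^ 4)) := by
  have hodd : Function.Injective fun k : ℕ => 2 * k + 1 := fun a b h => by simp only at h; omega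
  have hx2 := norm_pow_lt_one hx two_ne_zero
  have hprod : (∏' k : ℕ, (1 + x ^ (2 * k + 1))) * ∏' k : ℕ, (1 - x ^ (2 * k + 1)) =
      ∏' k : ℕ, (1 - (x ^ 2) ^ (2 * k + 1)) := by
    rw [← (multipliable_one_add_pow_comp hx hodd).tprod_mul
      (multipliable_one_sub_pow_comp hx hodd)]
    exact tprod_congr fun k => by ring
  have hE1 := eulerFun_ne_zero hx
  have hE2 := eulerFun_ne_zero hx2
  have hE4 := eulerFun_ne_zero (norm_pow_lt_one hx (n := 4) (by norm_num))
  rw [tprod_one_sub_pow_odd hx, tprod_one_sub_pow_odd hx2, show (x ^ 2) ^ 2 = x ^ 4 by ring]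
    at hprod
  rw [eq_div_iff (mul_ne_zero hE1 hE4)]
  field_simp at hprod
  linear_combination hprod

lemma tendsto_prod_one_add_pow_mul_one_add_pow (hx : ‖x‖ < 1) :
    Tendsto (fun m => ∏ i ∈ range m, ((1 + x ^ (4 * i + 1)) * (1 + x ^ (4 * i + 3)))) atTop
      (𝓝 (eulerFun (x ^ 2) ^ 2 / (eulerFun x * eulerFun (x ^ 4)))) := by
  have he := multipliable_one_add_pow_comp hx (e := fun k => 2 * (2 * k) + 1)
    fun a b h => by simp only at h; omega
  have ho := multipliable_one_add_pow_comp hx (e := fun k => 2 * (2 * k + 1) + 1)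
    fun a b h => by simp only at h; omega
  have hpair : Multipliable fun i => (1 + x ^ (4 * i + 1)) * (1 + x ^ (4 * i + 3)) :=
    (he.mul ho).congr fun i => by ring
  have hsplit : ∏' k : ℕ, (1 + x ^ (2 * k + 1)) =
      ∏' i : ℕ, ((1 + x ^ (4 * i + 1)) * (1 + x ^ (4 * i + 3))) := by
    rw [← tprod_even_mul_odd (f := fun k => 1 + x ^ (2 * k + 1)) he ho, ← he.tprod_mul ho]
    exact tprod_congr fun i => by ring
  rw [← tprod_one_add_pow_odd hx, hsplit]
  exact hpair.hasProd.tendsto_prod_nat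

end EulerFunction

section GaussIdentity

variable {x : ℂ}

lemma exists_norm_gaussBinom_le (hx : ‖x‖ < 1) : ∃ C, ∀ m k, ‖gaussBinom x m k‖ ≤ C := by
  have hlim := tendsto_qPochhammer hx
  obtain ⟨A, hA⟩ := isBounded_iff_forall_norm_le.1 (Metric.isBounded_range_of_tendsto _ hlim)
  obtain ⟨B, hB⟩ := isBounded_iff_forall_norm_le.1
    (Metric.isBounded_range_of_tendsto _ (hlim.inv₀ (eulerFun_ne_zero hx)))
  have hA' : ∀ n, ‖qPochhammer x n‖ ≤ A := fun n => hA _ (Set.mem_range_self n)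
  have hB' : ∀ n, ‖(qPochhammer x n)⁻¹‖ ≤ B := fun n => hB _ (Set.mem_range_self n)
  have hA0 := (norm_nonneg _).trans (hA' 0)
  have hB0 := (norm_nonneg _).trans (hB' 0)
  refine ⟨A * B * B, fun m k => ?_⟩
  unfold gaussBinom
  split_ifs
  · rw [div_eq_mul_inv, mul_inv, norm_mul, norm_mul, ← mul_assoc]
    exact mul_le_mul (mul_le_mul (hA' m) (hB' k) (norm_nonneg _) hA0) (hB' _) (norm_nonneg _)
      (by positivity)
  · rw [norm_zero]
    positivity

-- The summands of `prod_odd_pow_eq_sum_gaussBinom_hexagonal`, indexed by `j = k - m` and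
-- extended by zero to all of `ℤ`.
def gaussTerm (x : ℂ) (m : ℕ) (j : ℤ) : ℂ :=
  if j.natAbs ≤ m then gaussBinom (x ^ 4) (2 * m) (j + m).toNat * x ^ hexagonal j else 0

lemma sum_gaussBinom_eq_tsum_gaussTerm (m : ℕ) :
    ∑ k ∈ range (2 * m + 1), gaussBinom (x ^ 4) (2 * m) k * x ^ hexagonal (k - m) =
      ∑' j, gaussTerm x m j := by
  rw [tsum_eq_sum (f := gaussTerm x m) (s := Icc (-(m : ℤ)) m) fun j hj => by
    rw [mem_Icc] at hj
    exact if_neg (by omega)]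
  refine sum_nbij' (fun k => (k : ℤ) - m) (fun j => (j + m).toNat) ?_ ?_ ?_ ?_ ?_ <;>
    intro k hk <;> simp only [mem_range, mem_Icc] at hk ⊢
  · omega
  · omega
  · omega
  · omega
  · rw [gaussTerm, if_pos (by omega), show ((k : ℤ) - m + m).toNat = k by omega]

lemma tendsto_gaussTerm (hx : ‖x‖ < 1) (j : ℤ) :
    Tendsto (fun m => gaussTerm x m j) atTop (𝓝 ((eulerFun (x ^ 4))⁻¹ * x ^ hexagonal j)) := by
  have hE := eulerFun_ne_zero (norm_pow_lt_one hx (n := 4) (by norm_num))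
  have hP := tendsto_qPochhammer (norm_pow_lt_one hx (n := 4) (by norm_num))
  have htwo : Tendsto (fun m : ℕ => 2 * m) atTop atTop :=
    tendsto_atTop_atTop.2 fun b => ⟨b, fun a ha => by omega⟩
  have hshift (i : ℤ) : Tendsto (fun m : ℕ => (i + m).toNat) atTop atTop :=
    tendsto_atTop_atTop.2 fun b => ⟨b + i.natAbs, fun a ha => by omega⟩
  have hlim := ((hP.comp htwo).div ((hP.comp (hshift j)).mul (hP.comp (hshift (-j))))
    (mul_ne_zero hE hE)).mul_const (x ^ hexagonal j)
  rw [div_mul_cancel_left₀ hE] at hlim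
  refine hlim.congr' ((eventually_ge_atTop j.natAbs).mono fun m hm => ?_)
  dsimp only
  rw [gaussTerm, if_pos hm, gaussBinom, if_pos (by omega),
    show 2 * m - (j + m).toNat = (-j + m).toNat by omega]
  rfl

theorem tsum_pow_hexagonal (hx : ‖x‖ < 1) (hx0 : x ≠ 0) :
    ∑' j : ℤ, x ^ hexagonal j = eulerFun (x ^ 2) ^ 2 / eulerFun x := by
  have hx4 := norm_pow_lt_one hx (n := 4) (by norm_num)
  obtain ⟨C, hC⟩ := exists_norm_gaussBinom_le hx4
  have hC0 := (norm_nonneg _).trans (hC 0 0)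
  have hlim : Tendsto (fun m => ∑' j, gaussTerm x m j) atTop
      (𝓝 (∑' j, (eulerFun (x ^ 4))⁻¹ * x ^ hexagonal j)) := by
    refine tendsto_tsum_of_dominated_convergence (bound := fun j => C * ‖x‖ ^ hexagonal j)
      ?_ (tendsto_gaussTerm hx) (.of_forall fun m j => ?_)
    · exact ((summable_geometric_of_lt_one (norm_nonneg x) hx).comp_injective
        hexagonal_injective).mul_left C
    · unfold gaussTerm
      split_ifs
      · rw [norm_mul, norm_pow]
        exact mul_le_mul_of_nonneg_right (hC _ _) (by positivity)
      · rw [norm_zero]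
        positivity
  have hprod := tendsto_prod_one_add_pow_mul_one_add_pow hx
  simp only [prod_odd_pow_eq_sum_gaussBinom_hexagonal (pow_succ_ne_one_of_norm_lt_one hx4) hx0,
    sum_gaussBinom_eq_tsum_gaussTerm] at hprod
  have huniq := tendsto_nhds_unique hprod hlim
  rw [tsum_mul_left] at huniq
  have hE1 := eulerFun_ne_zero hx
  have hE4 := eulerFun_ne_zero hx4
  rw [eq_div_iff hE1]
  field_simp at huniq
  linear_combination -huniq

end GaussIdentity

section Theta

lemma jacobiTheta₂_term_sub_mul (s n : ℤ) (u v τ : ℂ) :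
    jacobiTheta₂_term (s - n) (u + v) (2 * τ) * jacobiTheta₂_term n (u - v) (2 * τ) =
      jacobiTheta₂_term s u τ * jacobiTheta₂_term (s - 2 * n) v τ := by
  simp only [jacobiTheta₂_term, ← Complex.exp_add]
  congr 1
  push_cast
  ring

theorem jacobiTheta₂_mul_jacobiTheta₂ (u v : ℂ) {τ : ℂ} (hτ : 0 < τ.im) :
    jacobiTheta₂ (u + v) (2 * τ) * jacobiTheta₂ (u - v) (2 * τ) =
      ∑' s : ℤ, jacobiTheta₂_term s u τ * ∑' n : ℤ, jacobiTheta₂_term (s - 2 * n) v τ := by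
  have h2τ : 0 < (2 * τ).im := by simpa using hτ
  have hsum (w : ℂ) : Summable fun n => ‖jacobiTheta₂_term n w (2 * τ)‖ :=
    summable_norm_iff.2 ((summable_jacobiTheta₂_term_iff w _).2 h2τ)
  let shear : ℤ × ℤ ≃ ℤ × ℤ :=
    { toFun := fun p => (p.1 - p.2, p.2)
      invFun := fun p => (p.1 + p.2, p.2)
      left_inv := fun p => by simp
      right_inv := fun p => by simp }
  have hinner (s : ℤ) : Summable fun n : ℤ => jacobiTheta₂_term (s - 2 * n) v τ :=
    ((summable_jacobiTheta₂_term_iff v τ).2 hτ).comp_injective fun a b h => by omega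
  rw [jacobiTheta₂, jacobiTheta₂, tsum_mul_tsum_of_summable_norm (hsum _) (hsum _),
    ← shear.tsum_eq]
  have hsheared :=
    shear.summable_iff.2 (summable_mul_of_summable_norm (hsum (u + v)) (hsum (u - v)))
  simp only [shear, Equiv.coe_fn_mk, Function.comp_def, jacobiTheta₂_term_sub_mul] at hsheared ⊢
  rw [hsheared.tsum_prod' fun s => (hinner s).mul_left (jacobiTheta₂_term s u τ)]
  exact tsum_congr fun s => by rw [← tsum_mul_left]

lemma jacobiTheta₂_term_half_eq_pow {d j : ℤ} (h : d * (d + 1) = 2 * (j * (2 * j + 1)))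
    (τ : ℂ) :
    jacobiTheta₂_term d (τ / 2) τ = cexp (2 * π * I * τ) ^ hexagonal j := by
  have h' : (d : ℂ) * (d + 1) = 2 * (j * (2 * j + 1)) := by exact_mod_cast h
  rw [jacobiTheta₂_term, ← Complex.exp_nat_mul, natCast_hexagonal]
  congr 1
  linear_combination (π * I * τ) * h'

lemma tsum_jacobiTheta₂_term_sub_two_mul (s : ℤ) (τ : ℂ) :
    ∑' n : ℤ, jacobiTheta₂_term (s - 2 * n) (τ / 2) τ =
      ∑' j : ℤ, cexp (2 * π * I * τ) ^ hexagonal j := by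
  obtain ⟨t, rfl | rfl⟩ := Int.even_or_odd' s
  · rw [← (Equiv.subLeft t).tsum_eq fun n => jacobiTheta₂_term (2 * t - 2 * n) (τ / 2) τ]
    exact tsum_congr fun j =>
      jacobiTheta₂_term_half_eq_pow (by simp only [Equiv.subLeft_apply]; ring) τ
  · rw [← (Equiv.addLeft (t + 1)).tsum_eq
      fun n => jacobiTheta₂_term (2 * t + 1 - 2 * n) (τ / 2) τ]
    exact tsum_congr fun j =>
      jacobiTheta₂_term_half_eq_pow (by simp only [Equiv.coe_addLeft]; ring) τ

lemma theta11_two_mul_eq (τ w : ℂ) :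
    theta11 (2 * τ) w =
      I * cexp (2 * π * I * (w / 2 + τ / 4)) * jacobiTheta₂ (w + τ + 1 / 2) (2 * τ) := by
  rw [theta11, jacobiTheta₂, mul_assoc I]
  congr 1
  rw [← tsum_mul_left]
  refine tsum_congr fun n => ?_
  rw [← Complex.exp_pi_mul_I, ← Complex.exp_int_mul, jacobiTheta₂_term]
  simp only [← Complex.exp_add]
  congr 1
  ring

lemma theta01_eq_jacobiTheta₂ (τ z : ℂ) : theta01 τ z = jacobiTheta₂ (z + 1 / 2) τ := by
  rw [theta01, jacobiTheta₂]
  refine tsum_congr fun n => ?_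
  rw [← Complex.exp_pi_mul_I, ← Complex.exp_int_mul, jacobiTheta₂_term]
  simp only [← Complex.exp_add]
  congr 1
  ring

lemma jacobiTheta₂_add_half_eq (z τ : ℂ) :
    jacobiTheta₂ (z + 1 / 2) τ =
      -cexp (2 * π * I * (z + τ / 2)) * ∑' s : ℤ, jacobiTheta₂_term s (z + τ + 1 / 2) τ := by
  rw [jacobiTheta₂, ← (Equiv.addRight (1 : ℤ)).tsum_eq, ← tsum_mul_left]
  refine tsum_congr fun s => ?_
  rw [Equiv.coe_addRight, neg_mul, ← neg_one_mul, ← Complex.exp_pi_mul_I, jacobiTheta₂_term,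
    jacobiTheta₂_term]
  simp only [← Complex.exp_add]
  congr 1
  push_cast
  ring

theorem theta11_mul_theta11 (τ z : ℂ) (hτ : 0 < τ.im) :
    theta11 (2 * τ) (z + τ / 2) * theta11 (2 * τ) (z - τ / 2) =
      (∑' j : ℤ, cexp (2 * π * I * τ) ^ hexagonal j) * theta01 τ z := by
  have hprod := jacobiTheta₂_mul_jacobiTheta₂ (z + τ + 1 / 2) (τ / 2) hτ
  simp only [tsum_jacobiTheta₂_term_sub_two_mul, tsum_mul_right] at hprod
  have hexp : cexp (2 * π * I * ((z + τ / 2) / 2 + τ / 4)) *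
      cexp (2 * π * I * ((z - τ / 2) / 2 + τ / 4)) = cexp (2 * π * I * (z + τ / 2)) := by
    rw [← Complex.exp_add]
    congr 1
    ring
  rw [theta11_two_mul_eq, theta11_two_mul_eq, theta01_eq_jacobiTheta₂,
    jacobiTheta₂_add_half_eq z τ, show z + τ / 2 + τ + 1 / 2 = z + τ + 1 / 2 + τ / 2 by ring,
    show z - τ / 2 + τ + 1 / 2 = z + τ + 1 / 2 - τ / 2 by ring, mul_mul_mul_comm,
    mul_mul_mul_comm I, I_mul_I, hexp, hprod]
  ring

end Theta

lemma dedekindEta_eq (τ : ℂ) :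
    dedekindEta τ = cexp (π * I * τ / 12) * eulerFun (cexp (2 * π * I * τ)) := by
  rw [dedekindEta, eulerFun]
  congr 1
  refine tprod_congr fun n => ?_
  rw [← Complex.exp_nat_mul]
  push_cast
  ring_nf

theorem stmt11 (τ z : ℂ) (hτ : 0 < τ.im) :
    theta11 (2*τ) (z + τ/2) * theta11 (2*τ) (z - τ/2) =
      Complex.exp (2*(π:ℂ)*Complex.I*τ*(-(1/8))) * ((dedekindEta (2*τ))^2 / dedekindEta τ) * theta01 τ z := by
  have hq : ‖cexp (2 * π * I * τ)‖ < 1 := UpperHalfPlane.norm_exp_two_pi_I_lt_one ⟨τ, hτ⟩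
  have hq2 : cexp (2 * π * I * (2 * τ)) = cexp (2 * π * I * τ) ^ 2 := by
    rw [← Complex.exp_nat_mul]
    ring_nf
  have hprefactor : cexp (2 * π * I * τ * (-(1 / 8))) * cexp (π * I * (2 * τ) / 12) ^ 2 /
      cexp (π * I * τ / 12) = 1 := by
    rw [div_eq_one_iff_eq (Complex.exp_ne_zero _), sq, ← Complex.exp_add, ← Complex.exp_add]
    congr 1
    ring
  rw [theta11_mul_theta11 τ z hτ, tsum_pow_hexagonal hq (Complex.exp_ne_zero _),
    dedekindEta_eq, dedekindEta_eq, hq2]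
  calc _ = cexp (2 * π * I * τ * (-(1 / 8))) * cexp (π * I * (2 * τ) / 12) ^ 2 /
      cexp (π * I * τ / 12) * (eulerFun (cexp (2 * π * I * τ) ^ 2) ^ 2 /
        eulerFun (cexp (2 * π * I * τ))) * theta01 τ z := by rw [hprefactor, one_mul]
    _ = _ := by ring

end
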